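/- arXiv:0811.3233 — 2 statements merged into one kernel-verified Lean document; each statement's English description precedes it below -/
import Mathlib

section
/- Let x be a factor of the Thue–Morse word such that 1001 is both a prefix of x and a suffix of x. Then the word x·0·x·0 is cubefree. -/
/-- A cube is a non-empty word of the form `z ++ z ++ z`. -/
def IsCube {α : Type*} (u : List α) : Prop := ∃ z : List α, z ≠ [] ∧ u = z ++ z ++ z

/-- A finite word is cubefree if none of its factors is a cube. -/
def Cubefree {α : Type*} (w : List α) : Prop := ∀ u : List α, u <:+: w → ¬ IsCube u

/-- The Thue–Morse morphism `μ : 0 ↦ 01, 1 ↦ 10`. -/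
def mu : List (Fin 2) → List (Fin 2)
  | [] => []
  | a :: w => (if a = 0 then [0, 1] else [1, 0]) ++ mu w

/-- `x` is a factor of the Thue–Morse word (the limit of `μ^k(0)`). -/
def FactorTM (x : List (Fin 2)) : Prop := ∃ k : ℕ, x <:+: mu^[k] [0]


/-- parity of binary digit sum -/
def V (n : ℕ) : ℕ := (Nat.digits 2 n).sum % 2

lemma Vlt (n : ℕ) : V n < 2 := Nat.mod_lt _ (by norm_num)

lemma V0 : V 0 = 0 := by simp [V]

lemma Vdouble (a : ℕ) : V (2*a) = V a := by
  rcases Nat.eq_zero_or_pos a with h | h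
  · simp [h]
  · unfold V
    rw [Nat.digits_def' (by norm_num : (1:ℕ) < 2) (by omega)]
    simp [Nat.mul_div_cancel_left _ (by norm_num : (0:ℕ) < 2), Nat.mul_mod_right]

lemma Vsucc (a : ℕ) : V (2*a+1) = (V a + 1) % 2 := by
  unfold V
  rw [Nat.digits_def' (by norm_num : (1:ℕ) < 2) (by omega)]
  have h1 : (2*a+1) % 2 = 1 := by omega
  have h2 : (2*a+1) / 2 = a := by omega
  rw [h1, h2]
  simp [Nat.add_mod, Nat.add_comm]

lemma H_pair {m : ℕ} (h : V m = V (m+1)) : m % 2 = 1 := by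
  rcases Nat.even_or_odd m with ⟨b, hb⟩ | ⟨b, hb⟩
  · subst hb
    rw [show b + b = 2*b by omega] at h
    rw [show 2*b+1 = 2*b+1 from rfl] at h
    have h1 := Vdouble b
    have h2 := Vsucc b
    have h3 := Vlt b
    omega
  · omega

lemma HALT {a : ℕ} (h : V (2*a+1) ≠ V (2*a+2)) : V a = V (a+1) := by
  have h1 := Vsucc a
  have h2 := Vdouble (a+1)
  have h3 := Vlt a
  have h4 := Vlt (a+1)
  rw [show 2*a+2 = 2*(a+1) by omega] at h
  omega

/-- in any 4 consecutive positions there is an adjacent equal pair -/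
lemma ALT (j : ℕ) : ∃ m, j ≤ m ∧ m ≤ j + 3 ∧ V m = V (m+1) := by
  rcases Nat.even_or_odd j with ⟨b, hb⟩ | ⟨b, hb⟩
  · -- j = 2b
    by_cases h1 : V (2*b+1) = V (2*b+2)
    · exact ⟨2*b+1, by omega, by omega, by rw [show 2*b+1+1 = 2*b+2 by omega]; exact h1⟩
    · by_cases h2 : V (2*(b+1)+1) = V (2*(b+1)+2)
      · exact ⟨2*(b+1)+1, by omega, by omega, by rw [show 2*(b+1)+1+1 = 2*(b+1)+2 by omega]; exact h2⟩
      · exfalso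
        have e1 := HALT h1
        have e2 := HALT h2
        have p1 := H_pair e1
        have p2 := H_pair e2
        omega
  · -- j = 2b+1
    by_cases h1 : V (2*b+1) = V (2*b+2)
    · exact ⟨2*b+1, by omega, by omega, by rw [show 2*b+1+1 = 2*b+2 by omega]; exact h1⟩
    · by_cases h2 : V (2*(b+1)+1) = V (2*(b+1)+2)
      · exact ⟨2*(b+1)+1, by omega, by omega, by rw [show 2*(b+1)+1+1 = 2*(b+1)+2 by omega]; exact h2⟩
      · exfalso
        have e1 := HALT h1
        have e2 := HALT h2
        have p1 := H_pair e1
        have p2 := H_pair e2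
        omega

/-- Thue–Morse is overlap-free -/
lemma OF : ∀ p, 1 ≤ p → ∀ j, (∀ k, k ≤ p → V (j+k) = V (j+k+p)) → False := by
  intro p
  induction p using Nat.strong_induction_on with
  | _ p IH =>
    intro hp j h
    rcases Nat.even_or_odd p with ⟨r, hr⟩ | ⟨r, hr⟩
    · -- p = 2r
      have hr' : p = 2*r := by omega
      subst hr'
      have hr1 : 1 ≤ r := by omega
      rcases Nat.even_or_odd j with ⟨b, hb⟩ | ⟨b, hb⟩
      · -- j = 2b
        have hb' : j = 2*b := by omega
        refine IH r (by omega) hr1 b (fun k hk => ?_)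
        have := h (2*k) (by omega)
        rw [hb'] at this
        rw [show 2*b + 2*k = 2*(b+k) by omega, show 2*(b+k) + 2*r = 2*(b+k+r) by omega] at this
        rw [Vdouble, Vdouble] at this
        exact this
      · -- j = 2b+1
        have hb' : j = 2*b+1 := by omega
        refine IH r (by omega) hr1 b (fun k hk => ?_)
        rcases Nat.eq_zero_or_pos k with hk0 | hk0
        · subst hk0
          have := h 0 (by omega)
          rw [hb'] at this
          rw [show 2*b+1+0 = 2*b+1 by omega] at this
          rw [show 2*b+1+2*r = 2*(b+r)+1 by omega] at this
          rw [Vsucc, Vsucc] at this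
          have l1 := Vlt b; have l2 := Vlt (b+r)
          simp only [Nat.add_zero]
          omega
        · obtain ⟨c, hc⟩ : ∃ c, k = c + 1 := ⟨k-1, by omega⟩
          have := h (2*c+1) (by omega)
          rw [hb'] at this
          rw [show 2*b+1+(2*c+1) = 2*(b+c+1) by omega,
              show 2*(b+c+1) + 2*r = 2*(b+c+1+r) by omega] at this
          rw [Vdouble, Vdouble] at this
          rw [hc]
          rw [show b + (c+1) = b+c+1 by omega, show b+c+1+r = b+c+1+r from rfl]
          exact this
    · -- p odd
      have hpodd : p % 2 = 1 := by omega
      rcases Nat.lt_or_ge p 3 with h3 | h3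
      · -- p = 1
        have hp1 : p = 1 := by omega
        subst hp1
        have e0 := h 0 (by omega)
        have e1 := h 1 (by omega)
        simp only [Nat.add_zero] at e0
        have q0 := H_pair e0
        have q1 := H_pair (by rw [show j+1+1 = j+1+1 from rfl] at e1; exact e1)
        omega
      · -- p odd ≥ 3
        obtain ⟨m, hm1, hm2, hm3⟩ := ALT j
        rcases le_or_gt (m - j + 1) p with hc | hc
        · -- use equations at k = m-j, m-j+1
          have e1 := h (m-j) (by omega)
          have e2 := h (m-j+1) (by omega)
          rw [show j + (m-j) = m by omega] at e1
          rw [show j + (m-j+1) = m+1 by omega] at e2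
          rw [show m+1+p = m+p+1 by omega] at e2
          have hpair2 : V (m+p) = V (m+p+1) := by rw [← e1, ← e2]; exact hm3
          have q1 := H_pair hm3
          have q2 := H_pair hpair2
          omega
        · -- m = j+3, p = 3
          have hm : m = j + 3 ∧ p = 3 := by omega
          obtain ⟨hmj, hp3⟩ := hm
          subst hmj; subst hp3
          have e0 := h 0 (by omega)
          have e1 := h 1 (by omega)
          simp only [Nat.add_zero] at e0
          -- e0 : V j = V (j+3), e1 : V (j+1) = V (j+1+3)
          have hpairj : V j = V (j+1) := by
            rw [e0, e1, show j+1+3 = j+3+1 by omega]; exact hm3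
          have q1 := H_pair hpairj
          have q2 := H_pair hm3
          omega

/-- The Thue–Morse sequence as a function. -/
def tm (n : ℕ) : Fin 2 := ⟨V n, Vlt n⟩

lemma tm_iff {a b : ℕ} : tm a = tm b ↔ V a = V b := by
  simp [tm, Fin.ext_iff]

lemma tm_zero_iff {a : ℕ} : tm a = 0 ↔ V a = 0 := by
  simp [tm, Fin.ext_iff]

lemma tm_one_iff {a : ℕ} : tm a = 1 ↔ V a = 1 := by
  simp [tm, Fin.ext_iff]

lemma mu_append (u v : List (Fin 2)) : mu (u ++ v) = mu u ++ mu v := by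
  induction u with
  | nil => simp [mu]
  | cons a w ih => simp [mu, ih]

lemma mu_map_range (M : ℕ) :
    mu ((List.range M).map tm) = (List.range (2*M)).map tm := by
  induction M with
  | zero => simp [mu]
  | succ M ih =>
    rw [List.range_succ, List.map_append, mu_append, ih]
    rw [show 2*(M+1) = 2*M+1+1 by omega, List.range_succ, List.range_succ]
    rw [List.map_append, List.map_append]
    rw [List.append_assoc]
    congr 1
    simp only [List.map_cons, List.map_nil]
    have hd := Vdouble M
    have hs := Vsucc M
    have hl := Vlt M
    by_cases h : V M = 0
    · have h0 : tm M = 0 := tm_zero_iff.mpr h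
      have h1 : tm (2*M) = 0 := tm_zero_iff.mpr (by omega)
      have h2 : tm (2*M+1) = 1 := tm_one_iff.mpr (by omega)
      simp [mu, h0, h1, h2]
    · have h' : V M = 1 := by omega
      have h0 : tm M = 1 := tm_one_iff.mpr h'
      have h1 : tm (2*M) = 1 := tm_one_iff.mpr (by omega)
      have h2 : tm (2*M+1) = 0 := tm_zero_iff.mpr (by omega)
      simp [mu, h0, h1, h2]

lemma mu_iter (k : ℕ) : mu^[k] [0] = (List.range (2^k)).map tm := by
  induction k with
  | zero =>
    have : tm 0 = 0 := tm_zero_iff.mpr V0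
    norm_num; simp [this]
  | succ k ih =>
    rw [Function.iterate_succ_apply', ih, mu_map_range]
    congr 2
    rw [pow_succ, Nat.mul_comm]

lemma infix_getElem {α : Type*} {u w : List α} (h : u <:+: w) :
    ∃ i, i + u.length ≤ w.length ∧
      ∀ j (hj : j < u.length) (hw : i + j < w.length), u[j] = w[i+j] := by
  obtain ⟨l, r, rfl⟩ := h
  refine ⟨l.length, by simp only [List.length_append]; omega, ?_⟩
  intro j hj hw
  have h1 : (l ++ u ++ r)[l.length + j]'hw
      = (l ++ u)[l.length + j]'(by simp [List.length_append]; omega) :=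
    List.getElem_append_left (by simp [List.length_append]; omega)
  have h2 : (l ++ u)[l.length + j]'(by simp [List.length_append]; omega)
      = u[l.length + j - l.length]'(by simp [Nat.add_sub_cancel_left]; omega) :=
    List.getElem_append_right (by omega)
  rw [h1, h2]
  congr 1
  omega

/-- letter function of the word x0x0 -/
def Fw (i n j : ℕ) : Fin 2 :=
  if j < n then tm (i+j) else if j = n then 0
  else if j < 2*n+1 then tm (i + (j - (n+1))) else 0

lemma key (i n m s p : ℕ) (hn : n = m + 4) (hp : 1 ≤ p) (hsp : s + 3*p ≤ 2*n+2)
    (hq0 : V i = 1) (hq1 : V (i+1) = 0) (hq2 : V (i+2) = 0) (hq3 : V (i+3) = 1)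
    (hs0 : V (i+m) = 1) (hs1 : V (i+m+1) = 0) (hs2 : V (i+m+2) = 0) (hs3 : V (i+m+3) = 1)
    (hF : ∀ j, s ≤ j → j + p < s + 3*p → Fw i n j = Fw i n (j+p)) : False := by
  have hpn : p ≤ n := by omega
  obtain ⟨q, hqdef⟩ : ∃ q, p + q = n + 1 := ⟨n+1-p, by omega⟩
  have hie : i % 2 = 0 := by
    have h := H_pair (m := i+1) (by rw [show i+1+1 = i+2 by omega, hq1, hq2])
    omega
  have hme : m % 2 = 0 := by
    have h := H_pair (m := i+m+1) (by rw [show i+m+1+1 = i+m+2 by omega, hs1, hs2])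
    omega
  -- run extraction lemmas
  have RA : ∀ j, s ≤ j → j + p < s + 3*p → j + p < n → V (i+j) = V (i+j+p) := by
    intro j h1 h2 h3
    have h := hF j h1 h2
    simp only [Fw] at h
    rw [if_pos (show j < n by omega), if_pos h3, tm_iff,
        show i + (j+p) = i+j+p by omega] at h
    exact h
  have RB : ∀ a, s ≤ a + q → a + q + p < s + 3*p → a + q < n → V (i+a) = V (i+a+q) := by
    intro a h1 h2 h3
    have h := hF (a+q) h1 h2
    simp only [Fw] at h
    rw [if_pos h3] at h
    rw [show a+q+p = n+1+a by omega] at h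
    rw [if_neg (show ¬ (n+1+a < n) by omega), if_neg (show ¬ (n+1+a = n) by omega),
        if_pos (show n+1+a < 2*n+1 by omega), show n+1+a - (n+1) = a by omega,
        tm_iff, show i + (a+q) = i+a+q by omega] at h
    exact h.symm
  have RC : ∀ b, s ≤ n+1+b → n+1+b+p < s + 3*p → b + p < n → V (i+b) = V (i+b+p) := by
    intro b h1 h2 h3
    have h := hF (n+1+b) h1 h2
    simp only [Fw] at h
    rw [if_neg (show ¬ (n+1+b < n) by omega), if_neg (show ¬ (n+1+b = n) by omega),
        if_pos (show n+1+b < 2*n+1 by omega), show n+1+b - (n+1) = b by omega] at h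
    rw [show n+1+b+p = n+1+(b+p) by omega] at h
    rw [if_neg (show ¬ (n+1+(b+p) < n) by omega), if_neg (show ¬ (n+1+(b+p) = n) by omega),
        if_pos (show n+1+(b+p) < 2*n+1 by omega), show n+1+(b+p) - (n+1) = b+p by omega,
        tm_iff, show i + (b+p) = i+b+p by omega] at h
    exact h
  have Rd1 : ∀ a, a + p = n → s ≤ a → a + p < s + 3*p → V (i+a) = 0 := by
    intro a h1 h2 h3
    have h := hF a h2 h3
    simp only [Fw] at h
    rw [if_pos (show a < n by omega), h1, if_neg (show ¬ (n < n) by omega),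
        if_pos rfl, tm_zero_iff] at h
    exact h
  have Rd2 : ∀ b, b + 1 = p → s ≤ n → n + p < s + 3*p → V (i+b) = 0 := by
    intro b h1 h2 h3
    have h := hF n h2 h3
    simp only [Fw] at h
    rw [if_neg (show ¬ (n < n) by omega)] at h
    simp only [if_pos trivial] at h
    rw [if_neg (show ¬ (n+p < n) by omega), if_neg (show ¬ (n+p = n) by omega),
        if_pos (show n+p < 2*n+1 by omega), show n+p - (n+1) = b by omega] at h
    exact tm_zero_iff.mp h.symm
  -- ===== case analysis =====
  rcases le_or_gt (s + 3*p) n with hA | hA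
  · -- cube inside first copy
    refine OF p hp (i+s) (fun k hk => ?_)
    have h := RA (s+k) (by omega) (by omega) (by omega)
    rw [show i+(s+k) = i+s+k by omega] at h
    exact h
  rcases le_or_gt (n+1) s with hB | hC
  · -- cube inside second copy
    obtain ⟨a, ha⟩ : ∃ a, n+1+a = s := ⟨s-(n+1), by omega⟩
    by_cases hb1 : p = 1 ∧ s + 3 = 2*n+2
    · obtain ⟨hp1, hs1'⟩ := hb1
      subst hp1
      have h := RC (m+2) (by omega) (by omega) (by omega)
      rw [show i+(m+2) = i+m+2 by omega, show i+m+2+1 = i+m+3 by omega, hs2, hs3] at h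
      omega
    · refine OF p hp (i+a) (fun k hk => ?_)
      have h := RC (a+k) (by omega) (by omega) (by omega)
      rw [show i+(a+k) = i+a+k by omega] at h
      exact h
  -- now s ≤ n and n < s + 3p
  by_cases hd2 : n < s + 2*p
  · by_cases hd1 : s + p ≤ n
    · by_cases hd3 : s + 3*p = 2*n+2
      · -- case {d1,d2,d3}
        have h2p : n + 2 ≤ 2*p := by omega
        have hq1' : q + 1 ≤ p := by omega
        rcases le_or_gt (q+2) p with hq2' | hq2'
        · refine OF q (by omega) i (fun k hk => ?_)
          exact RB k (by omega) (by omega) (by omega)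
        · have hqp : q + 1 = p := by omega
          have h1 := RB 0 (by omega) (by omega) (by omega)
          have h2 := Rd2 q (by omega) (by omega) (by omega)
          rw [show i+0 = i by omega, hq0] at h1
          omega
      · -- case {d1,d2}
        have hd3' : s + 3*p ≤ 2*n+1 := by omega
        rcases Nat.even_or_odd p with ⟨r, hpr⟩ | ⟨r, hpr⟩
        · -- p even
          rcases le_or_gt 4 p with hp4 | hp4
          · have h1 := RB 1 (by omega) (by omega) (by omega)
            have h2 := RB 2 (by omega) (by omega) (by omega)
            rw [hq1] at h1
            rw [hq2] at h2
            have hpair := H_pair (m := i+1+q)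
              (by rw [show i+1+q+1 = i+2+q by omega, ← h1, ← h2])
            omega
          · have hp2 : p = 2 := by omega
            rcases (show s + 3 = n ∨ s + 2 = n by omega) with hs' | hs'
            · have h := RA s (le_refl s) (by omega) (by omega)
              rw [show i+s = i+m+1 by omega, show i+m+1+p = i+m+3 by omega, hs1, hs3] at h
              omega
            · have h := RC 0 (by omega) (by omega) (by omega)
              rw [show i+0 = i by omega, show i+p = i+2 by omega, hq0, hq2] at h
              omega
        · -- p odd
          rcases (show p = 1 ∨ p = 3 ∨ 5 ≤ p by omega) with hp1 | hp3 | hp5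
          · subst hp1
            have h := Rd1 (m+3) (by omega) (by omega) (by omega)
            rw [show i+(m+3) = i+m+3 by omega, hs3] at h
            omega
          · have h := RB 1 (by omega) (by omega) (by omega)
            rw [show i+1+q = i+m+3 by omega, hq1, hs3] at h
            omega
          · rcases le_or_gt (n+4) (s+2*p) with hCT | hCT
            · have h1 := RC 1 (by omega) (by omega) (by omega)
              have h2 := RC 2 (by omega) (by omega) (by omega)
              rw [hq1] at h1
              rw [hq2] at h2
              have hpair := H_pair (m := i+1+p)
                (by rw [show i+1+p+1 = i+2+p by omega, ← h1, ← h2])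
              omega
            · rcases le_or_gt (s+p+3) n with hAT | hAT
              · obtain ⟨c, hc⟩ : ∃ c, c + p + 3 = n := ⟨n-p-3, by omega⟩
                have h1 := RA c (by omega) (by omega) (by omega)
                have h2 := RA (c+1) (by omega) (by omega) (by omega)
                rw [show i+c+p = i+m+1 by omega, hs1] at h1
                rw [show i+(c+1) = i+c+1 by omega, show i+c+1+p = i+m+2 by omega, hs2] at h2
                have hpair := H_pair (m := i+c) (show V (i+c) = V (i+c+1) by omega)
                omega
              · have hp5' : p = 5 := by omega
                have hs7 : s + 7 = n := by omega
                have h1 := Rd2 4 (by omega) (by omega) (by omega)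
                have h2 := RC 1 (by omega) (by omega) (by omega)
                rw [hq1, show i+1+p = i+6 by omega] at h2
                obtain ⟨w, hw⟩ : ∃ w, i = 2*w := ⟨i/2, by omega⟩
                have e2 : V (i+2) = V (w+1) := by rw [show i+2 = 2*(w+1) by omega, Vdouble]
                have e4 : V (i+4) = V (w+2) := by rw [show i+4 = 2*(w+2) by omega, Vdouble]
                have e6 : V (i+6) = V (w+3) := by rw [show i+6 = 2*(w+3) by omega, Vdouble]
                have pa := H_pair (show V (w+1) = V (w+2) by omega)
                have pb := H_pair (m := w+2) (show V (w+2) = V (w+2+1) by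
                  rw [show w+2+1 = w+3 by omega]; omega)
                omega
    · by_cases hd3 : s + 3*p = 2*n+2
      · -- case {d2,d3}
        have h2pn : 2*p ≤ n := by omega
        rcases Nat.lt_or_ge (2*p) n with hlt | hge
        · refine OF p hp i (fun k hk => ?_)
          exact RC k (by omega) (by omega) (by omega)
        · have h2pn' : 2*p = n := by omega
          obtain ⟨b, hb⟩ : ∃ b, b + 1 = p := ⟨p-1, by omega⟩
          have h1 := Rd2 b hb (by omega) (by omega)
          have h2 := RC b (by omega) (by omega) (by omega)
          rw [show i+b+p = i+m+3 by omega, hs3] at h2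
          omega
      · -- case {d2}
        have hd3' : s + 3*p ≤ 2*n+1 := by omega
        rcases Nat.lt_or_ge (s+p) (n+2) with hseq | hsge
        · have hsp1 : s + p = n+1 := by omega
          rcases (show p = 1 ∨ p = 2 ∨ (3 ≤ p ∧ p % 2 = 1) ∨ (4 ≤ p ∧ p % 2 = 0) by omega)
            with hp1 | hp2 | ⟨hp3, hpo⟩ | ⟨hp4, hpe⟩
          · have h := Rd2 0 (by omega) (by omega) (by omega)
            rw [show i+0 = i by omega, hq0] at h
            omega
          · have h := RC 0 (by omega) (by omega) (by omega)
            rw [show i+0 = i by omega, show i+p = i+2 by omega, hq0, hq2] at h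
            omega
          · have h1 := RC 1 (by omega) (by omega) (by omega)
            have h2 := RC 2 (by omega) (by omega) (by omega)
            rw [hq1] at h1
            rw [hq2] at h2
            have hpair := H_pair (m := i+1+p)
              (by rw [show i+1+p+1 = i+2+p by omega, ← h1, ← h2])
            omega
          · have h1 := RB 1 (by omega) (by omega) (by omega)
            have h2 := RB 2 (by omega) (by omega) (by omega)
            rw [hq1] at h1
            rw [hq2] at h2
            have hpair := H_pair (m := i+1+q)
              (by rw [show i+1+q+1 = i+2+q by omega, ← h1, ← h2])
            omega
        · refine OF p hp i (fun k hk => ?_)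
          exact RC k (by omega) (by omega) (by omega)
  · -- case {d1}
    have hs2p' : s + 2*p ≤ n := by omega
    rcases Nat.lt_or_ge (s+2*p) n with hlt | hge
    · refine OF p hp (i+s) (fun k hk => ?_)
      have h := RA (s+k) (by omega) (by omega) (by omega)
      rw [show i+(s+k) = i+s+k by omega] at h
      exact h
    · have hs2p : s + 2*p = n := by omega
      rcases Nat.even_or_odd p with ⟨r, hpr⟩ | ⟨r, hpr⟩
      · rcases le_or_gt 4 p with hp4 | hp4
        · have h1 := RB 1 (by omega) (by omega) (by omega)
          have h2 := RB 2 (by omega) (by omega) (by omega)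
          rw [hq1] at h1
          rw [hq2] at h2
          have hpair := H_pair (m := i+1+q)
            (by rw [show i+1+q+1 = i+2+q by omega, ← h1, ← h2])
          omega
        · have hp2 : p = 2 := by omega
          have h := RA s (le_refl s) (by omega) (by omega)
          rw [show i+s = i+m by omega, show i+m+p = i+m+2 by omega, hs0, hs2] at h
          omega
      · rcases (show p = 1 ∨ 3 ≤ p by omega) with hp1 | hp3
        · have h := RA s (le_refl s) (by omega) (by omega)
          rw [show i+s = i+m+2 by omega, show i+m+2+p = i+m+3 by omega, hs2, hs3] at h
          omega
        · obtain ⟨c, hc⟩ : ∃ c, c + p + 3 = n := ⟨n-p-3, by omega⟩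
          have h1 := RA c (by omega) (by omega) (by omega)
          have h2 := RA (c+1) (by omega) (by omega) (by omega)
          rw [show i+c+p = i+m+1 by omega, hs1] at h1
          rw [show i+(c+1) = i+c+1 by omega, show i+c+1+p = i+m+2 by omega, hs2] at h2
          have hpair := H_pair (m := i+c) (show V (i+c) = V (i+c+1) by omega)
          omega

lemma Wval (x : List (Fin 2)) (i : ℕ)
    (hxval : ∀ j (hj : j < x.length), x[j] = tm (i+j)) :
    ∀ j (hj : j < (x ++ [0] ++ x ++ [0]).length),
      (x ++ [0] ++ x ++ [0])[j] = Fw i x.length j := by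
  have hWlen : (x ++ [0] ++ x ++ [0]).length = 2*x.length + 2 := by
    simp only [List.length_append, List.length_cons, List.length_nil]
    omega
  intro j hj
  have hj' : j < 2*x.length + 2 := by rw [hWlen] at hj; exact hj
  have hlen1 : (x ++ [0]).length = x.length + 1 := by simp
  have hlen2 : (x ++ [0] ++ x).length = 2*x.length + 1 := by
    simp only [List.length_append, List.length_cons, List.length_nil]; omega
  rcases lt_trichotomy j x.length with h1 | h1 | h1
  · rw [List.getElem_append_left (show j < (x ++ [0] ++ x).length by omega),
        List.getElem_append_left (show j < (x ++ [0]).length by omega),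
        List.getElem_append_left h1, hxval j h1]
    simp only [Fw]
    split_ifs <;> first | rfl | omega
  · subst h1
    rw [List.getElem_append_left (show x.length < (x ++ [0] ++ x).length by omega),
        List.getElem_append_left (show x.length < (x ++ [0]).length by omega),
        List.getElem_append_right (show x.length ≤ x.length by omega),
        List.getElem_singleton]
    simp only [Fw]
    split_ifs <;> first | rfl | omega
  · rcases lt_trichotomy j (2*x.length+1) with h2 | h2 | h2
    · rw [List.getElem_append_left (show j < (x ++ [0] ++ x).length by omega),
          List.getElem_append_right (show (x ++ [0]).length ≤ j by omega)]
      simp only [show j - (x ++ [0]).length = j - (x.length+1) from by omega]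
      rw [hxval (j - (x.length+1)) (by omega)]
      simp only [Fw]
      split_ifs <;> first | rfl | omega
    · subst h2
      rw [List.getElem_append_right (show (x ++ [0] ++ x).length ≤ 2*x.length+1 by omega),
          List.getElem_singleton]
      simp only [Fw]
      split_ifs <;> first | rfl | omega
    · omega

/-- If `x` is a factor of the Thue–Morse word with prefix and suffix `1001`,
then `x0x0` is cubefree. -/
theorem x0x0_cubefree (x : List (Fin 2)) (hx : FactorTM x)
    (hpre : [1, 0, 0, 1] <+: x) (hsuf : [1, 0, 0, 1] <:+ x) :
    Cubefree (x ++ [0] ++ x ++ [0]) := by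
  intro u hu hcube
  obtain ⟨z, hz, huz⟩ := hcube
  obtain ⟨k, hxk⟩ := hx
  rw [mu_iter] at hxk
  obtain ⟨i, hiN, hxv⟩ := infix_getElem hxk
  have hNlen : ((List.range (2^k)).map tm).length = 2^k := by simp
  have hxval : ∀ j (hj : j < x.length), x[j] = tm (i+j) := by
    intro j hj
    have hw : i + j < ((List.range (2^k)).map tm).length := by
      rw [hNlen] at hiN ⊢; omega
    rw [hxv j hj hw]
    simp
  have hn4 : 4 ≤ x.length := by
    have := hpre.length_le
    simpa using this
  obtain ⟨m, hm⟩ : ∃ m, x.length = m + 4 := ⟨x.length - 4, by omega⟩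
  -- prefix letter values
  have hq0 : V i = 1 := by
    have h := hpre.getElem (show 0 < ([1,0,0,1] : List (Fin 2)).length by simp)
    rw [hxval 0 (by omega)] at h
    have := tm_one_iff.mp h.symm
    rwa [show i+0 = i by omega] at this
  have hq1 : V (i+1) = 0 := by
    have h := hpre.getElem (show 1 < ([1,0,0,1] : List (Fin 2)).length by simp)
    rw [hxval 1 (by omega)] at h
    exact tm_zero_iff.mp h.symm
  have hq2 : V (i+2) = 0 := by
    have h := hpre.getElem (show 2 < ([1,0,0,1] : List (Fin 2)).length by simp)
    rw [hxval 2 (by omega)] at h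
    exact tm_zero_iff.mp h.symm
  have hq3 : V (i+3) = 1 := by
    have h := hpre.getElem (show 3 < ([1,0,0,1] : List (Fin 2)).length by simp)
    rw [hxval 3 (by omega)] at h
    exact tm_one_iff.mp h.symm
  -- suffix letter values
  obtain ⟨ll, hll⟩ := hsuf
  have hlll : ll.length = m := by
    have := congrArg List.length hll
    simp at this
    omega
  have hsval : ∀ c (hc : c < 4), tm (i+(m+c)) = ([1,0,0,1] : List (Fin 2))[c]'(by simpa using hc) := by
    intro c hc
    have hgeq := List.getElem_of_eq hll
      (show m+c < (ll ++ ([1,0,0,1] : List (Fin 2))).length by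
        simp only [List.length_append, List.length_cons, List.length_nil]; omega)
    have hr := List.getElem_append_right
      (show ll.length ≤ m + c by omega)
      (h₂ := show m+c < (ll ++ ([1,0,0,1] : List (Fin 2))).length by
        simp only [List.length_append, List.length_cons, List.length_nil]; omega)
    rw [hgeq] at hr
    rw [hxval (m+c) (by omega)] at hr
    rw [hr]
    congr 1
    omega
  have hs0 : V (i+m) = 1 := by
    have h := hsval 0 (by omega)
    rw [show i+(m+0) = i+m by omega] at h
    exact tm_one_iff.mp h
  have hs1 : V (i+m+1) = 0 := by
    have h := hsval 1 (by omega)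
    rw [show i+(m+1) = i+m+1 by omega] at h
    exact tm_zero_iff.mp h
  have hs2 : V (i+m+2) = 0 := by
    have h := hsval 2 (by omega)
    rw [show i+(m+2) = i+m+2 by omega] at h
    exact tm_zero_iff.mp h
  have hs3 : V (i+m+3) = 1 := by
    have h := hsval 3 (by omega)
    rw [show i+(m+3) = i+m+3 by omega] at h
    exact tm_one_iff.mp h
  -- W values
  have hWlen : (x ++ [0] ++ x ++ [0]).length = 2*x.length + 2 := by
    simp only [List.length_append, List.length_cons, List.length_nil]
    omega
  have hWval := Wval x i hxval
  -- cube period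
  have hzp : 1 ≤ z.length := List.length_pos_iff.mpr hz
  obtain ⟨s, hsu, husv⟩ := infix_getElem hu
  have hulen : u.length = 3 * z.length := by
    rw [huz]
    simp only [List.length_append]
    omega
  have hsplen : s + 3*z.length ≤ 2*x.length + 2 := by
    rw [hulen] at hsu
    rw [hWlen] at hsu
    exact hsu
  have hperiod : ∀ kk (hkk : kk < 2*z.length),
      u[kk]'(by omega) = u[kk + z.length]'(by omega) := by
    intro kk hkk
    have ht : u.take (2*z.length) = z ++ z := by
      rw [huz]
      exact List.take_left' (by simp only [List.length_append]; omega)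
    have hd : u.drop z.length = z ++ z := by
      rw [huz, List.append_assoc]
      exact List.drop_left' rfl
    have e1 : (u.take (2*z.length))[kk]'(by rw [ht]; simp only [List.length_append]; omega)
        = u[kk]'(by omega) := List.getElem_take
    have e2 : (u.drop z.length)[kk]'(by rw [hd]; simp only [List.length_append]; omega)
        = u[z.length + kk]'(by omega) := List.getElem_drop
    have e3 : (u.take (2*z.length))[kk]'(by rw [ht]; simp only [List.length_append]; omega)
        = (u.drop z.length)[kk]'(by rw [hd]; simp only [List.length_append]; omega) := by
      simp only [ht, hd]
    rw [← e1, e3, e2]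
    congr 1
    omega
  have hFper : ∀ j, s ≤ j → j + z.length < s + 3*z.length →
      Fw i x.length j = Fw i x.length (j + z.length) := by
    intro j h1 h2
    have hk1 : j - s < 2*z.length := by omega
    have hWl : (x ++ [0] ++ x ++ [0]).length = 2*x.length + 2 := hWlen
    have ha := husv (j - s) (by omega) (by rw [hWl]; omega)
    have hb := husv (j - s + z.length) (by omega) (by rw [hWl]; omega)
    have hper := hperiod (j - s) hk1
    simp only [show s + (j - s) = j from by omega] at ha
    simp only [show s + (j - s + z.length) = j + z.length from by omega] at hb
    exact (hWval j (by omega)).symm.trans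
      (ha.symm.trans (hper.trans (hb.trans (hWval (j + z.length) (by omega)))))
  exact key i x.length m s z.length hm hzp hsplen hq0 hq1 hq2 hq3 hs0 hs1 hs2 hs3 hFper
end

section
/- Let x be a factor of the Thue–Morse word such that 1001 is both a prefix of x and a suffix of x. Then the word x·101100·x·101100 is cubefree. -/


lemma mu_cons (a : Fin 2) (w : List (Fin 2)) : mu (a :: w) = a :: (a+1) :: mu w := by
  fin_cases a <;> simp [mu]

lemma mu_length (u : List (Fin 2)) : (mu u).length = 2 * u.length := by
  induction u with
  | nil => simp [mu]
  | cons a u ih => rw [mu_cons]; simp [ih]; omega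

lemma mu_infix {u v : List (Fin 2)} (h : u <:+: v) : mu u <:+: mu v := by
  obtain ⟨s, t, rfl⟩ := h
  exact ⟨mu s, mu t, by rw [← mu_append, ← mu_append]⟩

lemma muk_succ (k : ℕ) : mu^[k+1] [0] = mu (mu^[k] [0]) :=
  Function.iterate_succ_apply' mu k [0]

lemma muk_length (k : ℕ) : (mu^[k] [0]).length = 2^k := by
  induction k with
  | zero => rfl
  | succ k ih => rw [muk_succ, mu_length, ih]; ring

lemma mu_prefix {u v : List (Fin 2)} (h : u <+: v) : mu u <+: mu v := by
  obtain ⟨t, rfl⟩ := h; exact ⟨mu t, (mu_append u t).symm⟩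

lemma muk_prefix_succ (k : ℕ) : mu^[k] [0] <+: mu^[k+1] [0] := by
  induction k with
  | zero => decide
  | succ j ih => rw [muk_succ j] at ih; rw [muk_succ (j+1), muk_succ j]; exact mu_prefix ih

lemma muk_prefix {k k' : ℕ} (h : k ≤ k') : mu^[k] [0] <+: mu^[k'] [0] := by
  induction k' with
  | zero => simp_all
  | succ n ih =>
    rcases Nat.lt_or_ge k (n+1) with h'|h'
    · exact (ih (by omega)).trans (muk_prefix_succ n)
    · have : k = n+1 := by omega
      subst this; exact List.prefix_rfl

-- getD index lemmas
lemma mu_getD_even (V : List (Fin 2)) (j : ℕ) (h : j < V.length) :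
    (mu V).getD (2*j) 0 = V.getD j 0 := by
  induction V generalizing j with
  | nil => simp at h
  | cons a vs ih =>
    rw [mu_cons]
    cases j with
    | zero => simp
    | succ j =>
      have : 2*(j+1) = (2*j)+1+1 := by ring
      rw [this]
      simp only [List.getD_cons_succ]
      exact ih j (by simpa using h)

lemma mu_getD_odd (V : List (Fin 2)) (j : ℕ) (h : j < V.length) :
    (mu V).getD (2*j+1) 0 = V.getD j 0 + 1 := by
  induction V generalizing j with
  | nil => simp at h
  | cons a vs ih =>
    rw [mu_cons]
    cases j with
    | zero => simp
    | succ j =>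
      have : 2*(j+1)+1 = (2*j+1)+1+1 := by ring
      rw [this]
      simp only [List.getD_cons_succ]
      exact ih j (by simpa using h)

-- overlap-freeness of Thue-Morse, index form
lemma fin2_ne : ∀ c : Fin 2, c ≠ c + 1 := by decide
lemma fin2_cancel : ∀ c d : Fin 2, c + 1 = d + 1 → c = d := by decide
lemma fin2_three : ∀ x y z : Fin 2, x ≠ y → y ≠ z → x = z := by decide

lemma getD_congr (l : List (Fin 2)) {n n' : ℕ} (h : n = n') : l.getD n 0 = l.getD n' 0 := by rw [h]

lemma no_overlap : ∀ k a p, 1 ≤ p → a + 2*p + 1 ≤ 2^k →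
    (∀ d, d ≤ p → (mu^[k] [0]).getD (a+d) 0 = (mu^[k] [0]).getD (a+d+p) 0) → False := by
  intro k
  induction k with
  | zero => intro a p h1 h2 _; simp at h2; omega
  | succ k ih =>
    intro a p hp hlen hyp
    have hpow : (2:ℕ)^(k+1) = 2*2^k := by ring
    set W := mu^[k+1] [0] with hW
    set V := mu^[k] [0] with hV
    have hVlen : V.length = 2^k := muk_length k
    have E0 : ∀ j, j < 2^k → W.getD (2*j) 0 = V.getD j 0 := by
      intro j hj; rw [hW, muk_succ]; exact mu_getD_even _ j (by rw [muk_length k]; exact hj)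
    have E1 : ∀ j, j < 2^k → W.getD (2*j+1) 0 = V.getD j 0 + 1 := by
      intro j hj; rw [hW, muk_succ]; exact mu_getD_odd _ j (by rw [muk_length k]; exact hj)
    have block : ∀ j, j < 2^k → W.getD (2*j) 0 ≠ W.getD (2*j+1) 0 := by
      intro j hj; rw [E0 j hj, E1 j hj]; exact fin2_ne _
    rcases Nat.even_or_odd p with ⟨r, hr⟩ | ⟨r, hr⟩
    · -- p = 2r even
      have hr1 : 1 ≤ r := by omega
      rcases Nat.even_or_odd a with ⟨b, hb⟩ | ⟨b, hb⟩
      · refine ih b r hr1 (by omega) ?_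
        intro e he
        calc V.getD (b+e) 0 = W.getD (2*(b+e)) 0 := (E0 (b+e) (by omega)).symm
          _ = W.getD (a+2*e) 0 := getD_congr _ (by omega)
          _ = W.getD (a+2*e+p) 0 := hyp (2*e) (by omega)
          _ = W.getD (2*(b+e+r)) 0 := getD_congr _ (by omega)
          _ = V.getD (b+e+r) 0 := E0 (b+e+r) (by omega)
      · refine ih b r hr1 (by omega) ?_
        intro e he
        rcases Nat.eq_zero_or_pos e with rfl | hepos
        · have key : V.getD b 0 + 1 = V.getD (b+r) 0 + 1 :=
            calc V.getD b 0 + 1 = W.getD (2*b+1) 0 := (E1 b (by omega)).symm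
              _ = W.getD (a+0) 0 := getD_congr _ (by omega)
              _ = W.getD (a+0+p) 0 := hyp 0 (by omega)
              _ = W.getD (2*(b+r)+1) 0 := getD_congr _ (by omega)
              _ = V.getD (b+r) 0 + 1 := E1 (b+r) (by omega)
          have := fin2_cancel _ _ key
          simpa using this
        · obtain ⟨e', rfl⟩ : ∃ e', e = e'+1 := ⟨e-1, by omega⟩
          calc V.getD (b+(e'+1)) 0 = W.getD (2*(b+e'+1)) 0 := (E0 (b+e'+1) (by omega)).symm
            _ = W.getD (a+(2*e'+1)) 0 := getD_congr _ (by omega)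
            _ = W.getD (a+(2*e'+1)+p) 0 := hyp (2*e'+1) (by omega)
            _ = W.getD (2*(b+e'+1+r)) 0 := getD_congr _ (by omega)
            _ = V.getD (b+(e'+1)+r) 0 := (getD_congr _ (by omega)).trans (E0 (b+e'+1+r) (by omega))
    · -- p = 2r+1 odd
      rcases Nat.eq_or_lt_of_le hp with hp1 | hp3
      · -- p = 1
        subst hr
        have hr0 : r = 0 := by omega
        subst hr0
        rcases Nat.even_or_odd a with ⟨j, hj⟩ | ⟨j, hj⟩
        · refine block j (by omega) ?_
          calc W.getD (2*j) 0 = W.getD (a+0) 0 := getD_congr _ (by omega)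
            _ = W.getD (a+0+(2*0+1)) 0 := hyp 0 (by omega)
            _ = W.getD (2*j+1) 0 := getD_congr _ (by omega)
        · refine block (j+1) (by omega) ?_
          calc W.getD (2*(j+1)) 0 = W.getD (a+1) 0 := getD_congr _ (by omega)
            _ = W.getD (a+1+(2*0+1)) 0 := hyp 1 (by omega)
            _ = W.getD (2*(j+1)+1) 0 := getD_congr _ (by omega)
      · have hp3' : 3 ≤ p := by omega
        have alt : ∀ y, a ≤ y → y+1 ≤ a+2*p → W.getD y 0 ≠ W.getD (y+1) 0 := by
          intro y hy1 hy2
          rcases Nat.even_or_odd y with ⟨j, hjy⟩ | ⟨j, hjy⟩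
          · intro hEq
            refine block j (by omega) ?_
            calc W.getD (2*j) 0 = W.getD y 0 := getD_congr _ (by omega)
              _ = W.getD (y+1) 0 := hEq
              _ = W.getD (2*j+1) 0 := getD_congr _ (by omega)
          · rcases Nat.lt_or_ge y (a+p) with hc | hc
            · intro hEq
              refine block (j+r+1) (by omega) ?_
              calc W.getD (2*(j+r+1)) 0 = W.getD (a+(y-a)+p) 0 := getD_congr _ (by omega)
                _ = W.getD (a+(y-a)) 0 := (hyp (y-a) (by omega)).symm
                _ = W.getD y 0 := getD_congr _ (by omega)
                _ = W.getD (y+1) 0 := hEq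
                _ = W.getD (a+(y+1-a)) 0 := getD_congr _ (by omega)
                _ = W.getD (a+(y+1-a)+p) 0 := hyp (y+1-a) (by omega)
                _ = W.getD (2*(j+r+1)+1) 0 := getD_congr _ (by omega)
            · intro hEq
              refine block (j-r) (by omega) ?_
              calc W.getD (2*(j-r)) 0 = W.getD (a+(y-p-a)) 0 := getD_congr _ (by omega)
                _ = W.getD (a+(y-p-a)+p) 0 := hyp (y-p-a) (by omega)
                _ = W.getD y 0 := getD_congr _ (by omega)
                _ = W.getD (y+1) 0 := hEq
                _ = W.getD (a+(y+1-p-a)+p) 0 := getD_congr _ (by omega)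
                _ = W.getD (a+(y+1-p-a)) 0 := (hyp (y+1-p-a) (by omega)).symm
                _ = W.getD (2*(j-r)+1) 0 := getD_congr _ (by omega)
        obtain ⟨e, j, he, hej⟩ : ∃ e j, (e = a ∨ e = a+1) ∧ e = 2*j := by
          rcases Nat.even_or_odd a with ⟨j, hj⟩ | ⟨j, hj⟩
          · exact ⟨a, j, Or.inl rfl, by omega⟩
          · exact ⟨a+1, j+1, Or.inr rfl, by omega⟩
        have h01 := alt e (by omega) (by omega)
        have h12 : W.getD (e+1) 0 ≠ W.getD (e+2) 0 := by
          have := alt (e+1) (by omega) (by omega)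
          intro hEq; exact this (hEq.trans (getD_congr _ (by omega)))
        have h23 : W.getD (e+2) 0 ≠ W.getD (e+3) 0 := by
          have := alt (e+2) (by omega) (by omega)
          intro hEq; exact this (hEq.trans (getD_congr _ (by omega)))
        have h34 : W.getD (e+3) 0 ≠ W.getD (e+4) 0 := by
          have := alt (e+3) (by omega) (by omega)
          intro hEq; exact this (hEq.trans (getD_congr _ (by omega)))
        have h01' : W.getD e 0 ≠ W.getD (e+1) 0 := by
          intro hEq; exact h01 hEq
        have q1 : W.getD e 0 = W.getD (e+2) 0 := fin2_three _ _ _ h01' h12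
        have q2 : W.getD (e+2) 0 = W.getD (e+4) 0 := fin2_three _ _ _ h23 h34
        have v01 : V.getD j 0 = V.getD (j+1) 0 :=
          calc V.getD j 0 = W.getD (2*j) 0 := (E0 j (by omega)).symm
            _ = W.getD e 0 := getD_congr _ (by omega)
            _ = W.getD (e+2) 0 := q1
            _ = W.getD (2*(j+1)) 0 := getD_congr _ (by omega)
            _ = V.getD (j+1) 0 := E0 (j+1) (by omega)
        have v12 : V.getD (j+1) 0 = V.getD (j+2) 0 :=
          calc V.getD (j+1) 0 = W.getD (2*(j+1)) 0 := (E0 (j+1) (by omega)).symm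
            _ = W.getD (e+2) 0 := getD_congr _ (by omega)
            _ = W.getD (e+4) 0 := q2
            _ = W.getD (2*(j+2)) 0 := getD_congr _ (by omega)
            _ = V.getD (j+2) 0 := E0 (j+2) (by omega)
        refine ih j 1 le_rfl (by omega) ?_
        intro d hd
        interval_cases d
        · simpa using v01
        · have : V.getD (j+1) 0 = V.getD (j+1+1) 0 := v12
          simpa using this

-- desubstitution and factor compression
lemma pre_desub : ∀ (vs t : List (Fin 2)), t <+: mu vs →
    ∃ vs', vs' <+: vs ∧ t <+: mu vs' ∧ 2 * vs'.length ≤ t.length + 1 := by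
  intro vs
  induction vs with
  | nil =>
    intro t ht
    simp [mu] at ht
    exact ⟨[], List.prefix_rfl, by simp [ht], by simp [ht]⟩
  | cons a rest ih =>
    intro t ht
    rw [mu_cons] at ht
    rcases t with _ | ⟨c, _ | ⟨c', t2⟩⟩
    · exact ⟨[], List.nil_prefix, by simp, by simp⟩
    · rw [List.cons_prefix_cons] at ht
      exact ⟨[a], by simp, by rw [mu_cons]; simp [ht.1, mu], by simp⟩
    · rw [List.cons_prefix_cons] at ht
      obtain ⟨rfl, h2⟩ := ht
      rw [List.cons_prefix_cons] at h2
      obtain ⟨rfl, h3⟩ := h2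
      obtain ⟨rest', hr1, hr2, hr3⟩ := ih t2 h3
      refine ⟨c :: rest', by simpa [List.cons_prefix_cons], ?_, by simp; omega⟩
      rw [mu_cons]
      simpa [List.cons_prefix_cons]

lemma desub : ∀ (v u : List (Fin 2)), u <:+: mu v →
    ∃ v', v' <:+: v ∧ u <:+: mu v' ∧ 2 * v'.length ≤ u.length + 2 := by
  intro v
  induction v with
  | nil =>
    intro u hu
    simp [mu] at hu
    exact ⟨[], List.infix_rfl, by simp [hu], by simp [hu]⟩
  | cons a rest ih =>
    intro u hu
    rw [mu_cons] at hu
    rw [List.infix_cons_iff] at hu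
    rcases hu with hpre | hu2
    · rcases u with _ | ⟨c, _ | ⟨c', u2⟩⟩
      · exact ⟨[], by simp, by simp, by simp⟩
      · rw [List.cons_prefix_cons] at hpre
        exact ⟨[a], ⟨[], rest, by simp⟩, by rw [mu_cons, hpre.1]; exact ⟨[], (a+1) :: mu [], rfl⟩, by simp⟩
      · rw [List.cons_prefix_cons] at hpre
        obtain ⟨rfl, h2⟩ := hpre
        rw [List.cons_prefix_cons] at h2
        obtain ⟨rfl, h3⟩ := h2
        obtain ⟨rest', hr1, hr2, hr3⟩ := pre_desub rest u2 h3
        refine ⟨c :: rest', ?_, ?_, by simp; omega⟩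
        · obtain ⟨w, hw⟩ := hr1
          exact ⟨[], w, by simp [hw]⟩
        · rw [mu_cons]
          exact (show c :: (c+1) :: u2 <+: c :: (c+1) :: mu rest' by
            simpa [List.cons_prefix_cons] using hr2).isInfix
    · rw [List.infix_cons_iff] at hu2
      rcases hu2 with hpre2 | hu3
      · rcases u with _ | ⟨c, u2⟩
        · exact ⟨[], by simp, by simp, by simp⟩
        · rw [List.cons_prefix_cons] at hpre2
          obtain ⟨rfl, h2⟩ := hpre2
          obtain ⟨rest', hr1, hr2, hr3⟩ := pre_desub rest u2 h2
          refine ⟨a :: rest', ?_, ?_, by simp; omega⟩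
          · obtain ⟨w, hw⟩ := hr1
            exact ⟨[], w, by simp [hw]⟩
          · rw [mu_cons]
            obtain ⟨w, hw⟩ := hr2
            exact ⟨[a], w, by simp [← hw]⟩
      · obtain ⟨v', h1, h2, h3⟩ := ih u hu3
        exact ⟨v', h1.trans (List.infix_cons List.infix_rfl), h2, h3⟩

lemma take_drop_infix (l : List (Fin 2)) (a n : ℕ) : (l.drop a).take n <:+: l :=
  ((l.drop a).take_prefix n).isInfix.trans (l.drop_suffix a).isInfix

lemma infix_exists {u l : List (Fin 2)} (h : u <:+: l) :
    ∃ a, a + u.length ≤ l.length ∧ u = (l.drop a).take u.length := by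
  obtain ⟨s, t, H⟩ := h
  refine ⟨s.length, by rw [← H]; simp only [List.length_append]; omega, ?_⟩
  rw [← H, List.append_assoc, List.drop_left, List.take_left]

lemma fac3_step : ∀ u : List (Fin 2), u <:+: mu^[5] [0] → u.length ≤ 3 → u <:+: mu^[4] [0] := by
  intro u h hl
  obtain ⟨a, ha, hu⟩ := infix_exists h
  have h32 : (mu^[5] [0]).length = 32 := by rw [muk_length]; norm_num
  rw [h32] at ha
  have key : ∀ a' ∈ List.range 32, ∀ n ∈ List.range 4, ((mu^[5] [0]).drop a').take n <:+: mu^[4] [0] := by decide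
  rcases Nat.eq_zero_or_pos u.length with h0 | hpos
  · rw [List.length_eq_zero_iff.mp h0]; exact ⟨[], mu^[4] [0], by simp⟩
  · rw [hu]; exact key a (by simp; omega) u.length (by simp; omega)

lemma fac3 : ∀ k u, u <:+: mu^[k] [0] → u.length ≤ 3 → u <:+: mu^[4] [0] := by
  intro k
  induction k with
  | zero => intro u h hl; exact h.trans (muk_prefix (by omega)).isInfix
  | succ k ih =>
    intro u h hl
    by_cases hk : k+1 ≤ 4
    · exact h.trans (muk_prefix hk).isInfix
    · rw [muk_succ] at h
      obtain ⟨v', hv1, hv2, hv3⟩ := desub _ u h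
      have hv4 := ih v' hv1 (by omega)
      have h5 : u <:+: mu^[5] [0] := hv2.trans (by rw [muk_succ]; exact mu_infix hv4)
      exact fac3_step u h5 hl

lemma facA : ∀ j k u, u <:+: mu^[k] [0] → u.length ≤ 2^j + 2 → u <:+: mu^[j+4] [0] := by
  intro j
  induction j with
  | zero =>
    intro k u h hl
    exact fac3 k u h (by norm_num at hl; omega)
  | succ j ihj =>
    intro k
    induction k with
    | zero => intro u h hl; exact h.trans (muk_prefix (by omega)).isInfix
    | succ k ihk =>
      intro u h hl
      by_cases hk : k+1 ≤ j+1+4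
      · exact h.trans (muk_prefix hk).isInfix
      · rw [muk_succ] at h
        obtain ⟨v', hv1, hv2, hv3⟩ := desub _ u h
        have hv4 := ihj k v' hv1 (by
          have hpj : (2:ℕ)^(j+1) = 2*2^j := by ring
          omega)
        refine hv2.trans ?_
        rw [show j+1+4 = (j+4)+1 from rfl, muk_succ]
        exact mu_infix hv4

lemma fac18 {k : ℕ} {u : List (Fin 2)} (h : u <:+: mu^[k] [0]) (hl : u.length ≤ 18) :
    u <:+: mu^[8] [0] := facA 4 k u h (by norm_num; omega)

-- finite checks
set_option maxRecDepth 10000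
def tm8 : List (Fin 2) := [0,1,1,0,1,0,0,1,1,0,0,1,0,1,1,0,1,0,0,1,0,1,1,0,0,1,1,0,1,0,0,1,1,0,0,1,0,1,1,0,0,1,1,0,1,0,0,1,0,1,1,0,1,0,0,1,1,0,0,1,0,1,1,0,1,0,0,1,0,1,1,0,0,1,1,0,1,0,0,1,0,1,1,0,1,0,0,1,1,0,0,1,0,1,1,0,0,1,1,0,1,0,0,1,1,0,0,1,0,1,1,0,1,0,0,1,0,1,1,0,0,1,1,0,1,0,0,1,1,0,0,1,0,1,1,0,0,1,1,0,1,0,0,1,0,1,1,0,1,0,0,1,1,0,0,1,0,1,1,0,0,1,1,0,1,0,0,1,1,0,0,1,0,1,1,0,1,0,0,1,0,1,1,0,0,1,1,0,1,0,0,1,0,1,1,0,1,0,0,1,1,0,0,1,0,1,1,0,1,0,0,1,0,1,1,0,0,1,1,0,1,0,0,1,1,0,0,1,0,1,1,0,0,1,1,0,1,0,0,1,0,1,1,0,1,0,0,1,1,0,0,1,0,1,1,0]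

lemma tm8_eq : tm8 = mu^[8] [0] := by decide

def sw : List (Fin 2) := [1,0,1,1,0,0]

def chk (l : List (Fin 2)) (i p : ℕ) : Bool :=
  (List.range (2*p)).all fun r => l.getD (i+r) 0 == l.getD (i+r+p) 0

def cfCheck (l : List (Fin 2)) : Bool :=
  (List.range l.length).all fun i => (List.range 15).all fun q =>
    !(decide (i + 3*(q+1) ≤ l.length)) || !(chk l i (q+1))

def seamCheck (l : List (Fin 2)) : Bool :=
  (List.range 23).all fun i => (List.range 6).all fun q =>
    !(decide (17 < i + 3*(q+1))) || !(decide (i + 3*(q+1) ≤ l.length)) || !(chk l i (q+1))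

def win17 (a : ℕ) : List (Fin 2) := (tm8.drop a).take 17

def V1 : List (List (Fin 2)) := [[0,0,1,0,1,1,0,1,0,0,1,0,1,1,0,0,1],[0,0,1,1,0,1,0,0,1,0,1,1,0,1,0,0,1],[0,1,0,0,1,0,1,1,0,0,1,1,0,1,0,0,1],[0,1,0,0,1,0,1,1,0,1,0,0,1,1,0,0,1],[0,1,0,0,1,1,0,0,1,0,1,1,0,1,0,0,1],[1,0,1,1,0,0,1,1,0,1,0,0,1,1,0,0,1],[1,1,0,0,1,0,1,1,0,0,1,1,0,1,0,0,1],[1,1,0,1,0,0,1,1,0,0,1,0,1,1,0,0,1]]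

def V2 : List (List (Fin 2)) := [[1,0,0,1,0,1,1,0,0,1,1,0,1,0,0,1,0],[1,0,0,1,0,1,1,0,0,1,1,0,1,0,0,1,1],[1,0,0,1,0,1,1,0,1,0,0,1,0,1,1,0,0],[1,0,0,1,0,1,1,0,1,0,0,1,1,0,0,1,0],[1,0,0,1,1,0,0,1,0,1,1,0,0,1,1,0,1],[1,0,0,1,1,0,0,1,0,1,1,0,1,0,0,1,0],[1,0,0,1,1,0,1,0,0,1,0,1,1,0,1,0,0],[1,0,0,1,1,0,1,0,0,1,1,0,0,1,0,1,1]]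

def X16 : List (List (Fin 2)) := [[1,0,0,1],[1,0,0,1,1,0,0,1],[1,0,0,1,0,1,1,0,0,1],[1,0,0,1,1,0,1,0,0,1],[1,0,0,1,0,1,1,0,1,0,0,1],[1,0,0,1,1,0,1,0,0,1,1,0,0,1],[1,0,0,1,1,0,0,1,0,1,1,0,0,1],[1,0,0,1,1,0,0,1,0,1,1,0,1,0,0,1],[1,0,0,1,0,1,1,0,0,1,1,0,1,0,0,1],[1,0,0,1,0,1,1,0,1,0,0,1,1,0,0,1]]

lemma stage1a : ((List.range 240).all fun a =>
    !(decide ([1,0,0,1] <:+ win17 a)) || decide (win17 a ∈ V1)) = true := by decide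

lemma stage1b : ((List.range 240).all fun a =>
    !(decide ([1,0,0,1] <+: win17 a)) || decide (win17 a ∈ V2)) = true := by decide

lemma stage2 : (V1.all fun v1 => V2.all fun v2 => seamCheck (v1 ++ (sw ++ v2))) = true := by decide

lemma stage2b : (V1.all fun v1 => seamCheck (v1 ++ sw)) = true := by decide

lemma stage1c : ((List.range 257).all fun a => (List.range 17).all fun len =>
    !(decide ([1,0,0,1] <+: (tm8.drop a).take len)) ||
    !(decide ([1,0,0,1] <:+ (tm8.drop a).take len)) ||
    decide ((tm8.drop a).take len ∈ X16)) = true := by decide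

lemma stage2c : (X16.all fun x => cfCheck (x ++ (sw ++ (x ++ sw)))) = true := by decide

-- ===== bridging helpers =====
lemma getD_dropW (l : List (Fin 2)) (o r : ℕ) : (l.drop o).getD r 0 = l.getD (o+r) 0 := by
  simp [List.getD_eq_getElem?_getD, List.getElem?_drop]

lemma getD_takeW (l : List (Fin 2)) (n r : ℕ) (h : r < n) : (l.take n).getD r 0 = l.getD r 0 := by
  simp [List.getD_eq_getElem?_getD, List.getElem?_take, h]

lemma chk_of (l : List (Fin 2)) (i p : ℕ)
    (h : ∀ r, r < 2*p → l.getD (i+r) 0 = l.getD (i+r+p) 0) : chk l i p = true := by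
  unfold chk
  rw [List.all_eq_true]
  intro r hr
  rw [List.mem_range] at hr
  simp only [beq_iff_eq]
  exact h r hr

-- x has no overlap (as factor of TM)
lemma x_overlap {x : List (Fin 2)} (hx : FactorTM x) :
    ∀ a p, 1 ≤ p → a + 2*p + 1 ≤ x.length →
    (∀ d, d ≤ p → x.getD (a+d) 0 = x.getD (a+d+p) 0) → False := by
  intro a p hp hlen hyp
  obtain ⟨k, hk⟩ := hx
  obtain ⟨o, ho, hxo⟩ := infix_exists hk
  rw [muk_length] at ho
  refine no_overlap k (o+a) p hp (by omega) ?_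
  intro d hd
  have t1 : (mu^[k] [0]).getD (o+a+d) 0 = x.getD (a+d) 0 := by
    rw [hxo, getD_takeW _ _ _ (by omega), getD_dropW]
    exact getD_congr _ (by omega)
  have t2 : (mu^[k] [0]).getD (o+a+d+p) 0 = x.getD (a+d+p) 0 := by
    rw [hxo, getD_takeW _ _ _ (by omega), getD_dropW]
    exact getD_congr _ (by omega)
  rw [t1, t2]
  exact hyp d hd

def Lw : List (Fin 2) := [0,1,1,0,1,1,0]
def Rw : List (Fin 2) := [1,0,0,1,0,0,1]
def KW : List (Fin 2) := [1,0,0,1,1,0,1,1,0,0,1,0,0,1]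

lemma main (x : List (Fin 2)) (hx : FactorTM x)
    (hpre : [1, 0, 0, 1] <+: x) (hsuf : [1, 0, 0, 1] <:+ x)
    (W : ℕ → Fin 2)
    (A0 : ∀ n, W n = (x ++ (sw ++ (x ++ sw))).getD n 0)
    (i p : ℕ) (hp : 1 ≤ p) (hlen : i + 3*p ≤ 2*x.length + 12)
    (Hper : ∀ r, r < 2*p → W (i+r) = W (i+r+p)) : False := by
  obtain ⟨tl, htl⟩ := hpre
  obtain ⟨init, hinit⟩ := hsuf
  have hm4 : 4 ≤ x.length := by rw [← htl]; simp
  have hinitlen : init.length + 4 = x.length := by rw [← hinit]; simp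
  have Wcongr : ∀ {n n' : ℕ}, n = n' → W n = W n' := fun h => by rw [h]
  have hswl : sw.length = 6 := rfl
  have A1 : ∀ j, j < x.length → W j = x.getD j 0 := by
    intro j hj; rw [A0]; exact List.getD_append _ _ _ _ hj
  have A2 : ∀ d, d < 6 → W (x.length + d) = sw.getD d 0 := by
    intro d hd
    rw [A0, List.getD_append_right _ _ _ _ (by omega)]
    rw [show x.length + d - x.length = d by omega]
    exact List.getD_append _ _ _ _ (by simp [sw]; omega)
  have A3 : ∀ j, j < x.length → W (x.length + 6 + j) = x.getD j 0 := by
    intro d hd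
    rw [A0, List.getD_append_right _ _ _ _ (by omega)]
    rw [show x.length + 6 + d - x.length = 6 + d by omega]
    rw [List.getD_append_right _ _ _ _ (by simp [sw])]
    rw [show 6 + d - sw.length = d by simp [sw]]
    exact List.getD_append _ _ _ _ hd
  have A4 : ∀ d, d < 6 → W (2*x.length + 6 + d) = sw.getD d 0 := by
    intro d hd
    rw [A0, List.getD_append_right _ _ _ _ (by omega)]
    rw [show 2*x.length + 6 + d - x.length = 6 + (x.length + d) by omega]
    rw [List.getD_append_right _ _ _ _ (by simp [sw])]
    rw [show 6 + (x.length + d) - sw.length = x.length + d by simp [sw]]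
    rw [List.getD_append_right _ _ _ _ (by omega)]
    rw [show x.length + d - x.length = d by omega]
  have XP : ∀ d, d < 4 → x.getD d 0 = ([1,0,0,1] : List (Fin 2)).getD d 0 := by
    intro d hd; rw [← htl]; exact List.getD_append _ _ _ _ (by change d < 4; omega)
  have XS : ∀ d, d < 4 → x.getD (init.length + d) 0 = ([1,0,0,1] : List (Fin 2)).getD d 0 := by
    intro d hd
    rw [← hinit, List.getD_append_right _ _ _ _ (by omega)]
    exact getD_congr _ (by omega)
  -- case m ≤ 16 : full finite check
  by_cases hm : x.length ≤ 16
  · obtain ⟨k, hk⟩ := hx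
    have hx8 : x <:+: mu^[8] [0] := fac18 hk (by omega)
    obtain ⟨a, ha, hxa⟩ := infix_exists hx8
    rw [muk_length] at ha
    rw [← tm8_eq] at hxa
    have s1 := List.all_eq_true.mp stage1c a (List.mem_range.mpr (by norm_num at ha ⊢; omega))
    have s2 := List.all_eq_true.mp s1 x.length (List.mem_range.mpr (by omega))
    rw [← hxa] at s2
    simp only [Bool.or_eq_true, Bool.not_eq_true', decide_eq_false_iff_not, decide_eq_true_eq] at s2
    rcases s2 with (h' | h') | hmem
    · exact h' ⟨tl, htl⟩
    · exact h' ⟨init, hinit⟩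
    · have s3 := List.all_eq_true.mp stage2c x hmem
      unfold cfCheck at s3
      have hBL : (x ++ (sw ++ (x ++ sw))).length = 2*x.length + 12 := by simp [sw]; omega
      have s4 := List.all_eq_true.mp s3 i (List.mem_range.mpr (by omega))
      have s5 := List.all_eq_true.mp s4 (p-1) (List.mem_range.mpr (by omega))
      rw [show p - 1 + 1 = p by omega, hBL] at s5
      have hc : chk (x ++ (sw ++ (x ++ sw))) i p = true := by
        refine chk_of _ _ _ ?_
        intro r hr
        rw [← A0, ← A0]
        exact Hper r hr
      rw [hc, decide_eq_true (show i+3*p ≤ 2*x.length+12 by omega)] at s5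
      simp at s5
  -- m ≥ 17
  · obtain ⟨e, he⟩ : ∃ e, x.length = e + 17 := ⟨x.length - 17, by omega⟩
    -- known window: positions e+13 .. e+26
    have K : ∀ c, c < 14 → W (e+13+c) = KW.getD c 0 := by
      intro c hc
      interval_cases c
      · exact ((Wcongr (by omega)).trans (A1 (e+13) (by omega))).trans
          (((getD_congr x (by omega)).trans (XS 0 (by omega))).trans (by decide))
      · exact ((Wcongr (by omega)).trans (A1 (e+14) (by omega))).trans
          (((getD_congr x (by omega)).trans (XS 1 (by omega))).trans (by decide))
      · exact ((Wcongr (by omega)).trans (A1 (e+15) (by omega))).trans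
          (((getD_congr x (by omega)).trans (XS 2 (by omega))).trans (by decide))
      · exact ((Wcongr (by omega)).trans (A1 (e+16) (by omega))).trans
          (((getD_congr x (by omega)).trans (XS 3 (by omega))).trans (by decide))
      · exact ((Wcongr (by omega)).trans (A2 0 (by omega))).trans (by decide)
      · exact ((Wcongr (by omega)).trans (A2 1 (by omega))).trans (by decide)
      · exact ((Wcongr (by omega)).trans (A2 2 (by omega))).trans (by decide)
      · exact ((Wcongr (by omega)).trans (A2 3 (by omega))).trans (by decide)
      · exact ((Wcongr (by omega)).trans (A2 4 (by omega))).trans (by decide)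
      · exact ((Wcongr (by omega)).trans (A2 5 (by omega))).trans (by decide)
      · exact ((Wcongr (by omega)).trans (A3 0 (by omega))).trans ((XP 0 (by omega)).trans (by decide))
      · exact ((Wcongr (by omega)).trans (A3 1 (by omega))).trans ((XP 1 (by omega)).trans (by decide))
      · exact ((Wcongr (by omega)).trans (A3 2 (by omega))).trans ((XP 2 (by omega)).trans (by decide))
      · exact ((Wcongr (by omega)).trans (A3 3 (by omega))).trans ((XP 3 (by omega)).trans (by decide))
    have Wq : ∀ j, j ≤ e + 22 → W (j + (e+23)) = W j := by
      intro j hj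
      rcases Nat.lt_or_ge j (e+17) with h' | h'
      · exact ((Wcongr (by omega)).trans (A3 j (by omega))).trans (A1 j (by omega)).symm
      · obtain ⟨d, hd, rfl⟩ : ∃ d, d < 6 ∧ j = (e+17) + d := ⟨j - (e+17), by omega, by omega⟩
        exact ((Wcongr (by omega)).trans (A4 d (by omega))).trans
          ((Wcongr (by omega)).trans (A2 d (by omega))).symm
    have seam1L : ∀ t, t < 12 → t ≠ 4 → ¬(∀ d, d < 7 → W (e+11+t+d) = Lw.getD d 0) := by
      intro t ht ht4 hL
      interval_cases t
      · exact absurd ((K 2 (by omega)).symm.trans ((Wcongr (by omega)).trans (hL 4 (by omega)))) (by decide)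
      · exact absurd ((K 1 (by omega)).symm.trans ((Wcongr (by omega)).trans (hL 2 (by omega)))) (by decide)
      · exact absurd ((K 0 (by omega)).symm.trans ((Wcongr (by omega)).trans (hL 0 (by omega)))) (by decide)
      · exact absurd ((K 2 (by omega)).symm.trans ((Wcongr (by omega)).trans (hL 1 (by omega)))) (by decide)
      · exact absurd ht4 (by omega)
      · exact absurd ((K 3 (by omega)).symm.trans ((Wcongr (by omega)).trans (hL 0 (by omega)))) (by decide)
      · exact absurd ((K 4 (by omega)).symm.trans ((Wcongr (by omega)).trans (hL 0 (by omega)))) (by decide)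
      · exact absurd ((K 9 (by omega)).symm.trans ((Wcongr (by omega)).trans (hL 4 (by omega)))) (by decide)
      · exact absurd ((K 6 (by omega)).symm.trans ((Wcongr (by omega)).trans (hL 0 (by omega)))) (by decide)
      · exact absurd ((K 7 (by omega)).symm.trans ((Wcongr (by omega)).trans (hL 0 (by omega)))) (by decide)
      · exact absurd ((K 9 (by omega)).symm.trans ((Wcongr (by omega)).trans (hL 1 (by omega)))) (by decide)
      · exact absurd ((K 11 (by omega)).symm.trans ((Wcongr (by omega)).trans (hL 2 (by omega)))) (by decide)
    have seam1R : ∀ t, t < 12 → t ≠ 9 → ¬(∀ d, d < 7 → W (e+11+t+d) = Rw.getD d 0) := by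
      intro t ht ht9 hR
      interval_cases t
      · exact absurd ((K 0 (by omega)).symm.trans ((Wcongr (by omega)).trans (hR 2 (by omega)))) (by decide)
      · exact absurd ((K 0 (by omega)).symm.trans ((Wcongr (by omega)).trans (hR 1 (by omega)))) (by decide)
      · exact absurd ((K 4 (by omega)).symm.trans ((Wcongr (by omega)).trans (hR 4 (by omega)))) (by decide)
      · exact absurd ((K 1 (by omega)).symm.trans ((Wcongr (by omega)).trans (hR 0 (by omega)))) (by decide)
      · exact absurd ((K 2 (by omega)).symm.trans ((Wcongr (by omega)).trans (hR 0 (by omega)))) (by decide)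
      · exact absurd ((K 4 (by omega)).symm.trans ((Wcongr (by omega)).trans (hR 1 (by omega)))) (by decide)
      · exact absurd ((K 6 (by omega)).symm.trans ((Wcongr (by omega)).trans (hR 2 (by omega)))) (by decide)
      · exact absurd ((K 5 (by omega)).symm.trans ((Wcongr (by omega)).trans (hR 0 (by omega)))) (by decide)
      · exact absurd ((K 7 (by omega)).symm.trans ((Wcongr (by omega)).trans (hR 1 (by omega)))) (by decide)
      · exact absurd ht9 (by omega)
      · exact absurd ((K 8 (by omega)).symm.trans ((Wcongr (by omega)).trans (hR 0 (by omega)))) (by decide)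
      · exact absurd ((K 9 (by omega)).symm.trans ((Wcongr (by omega)).trans (hR 0 (by omega)))) (by decide)
    have Locc : ∀ ℓ, ℓ + 7 ≤ 2*e+46 → (∀ d, d < 7 → W (ℓ+d) = Lw.getD d 0) →
        ℓ = e+15 ∨ ℓ = 2*e+38 := by
      intro ℓ hb hL
      by_cases h1 : ℓ + 7 ≤ e+17
      · exfalso
        refine x_overlap hx ℓ 3 (by omega) (by omega) ?_
        intro d hd
        have a1 := (A1 (ℓ+d) (by omega)).symm.trans (hL d (by omega))
        have a2 := (A1 (ℓ+d+3) (by omega)).symm.trans ((Wcongr (by omega)).trans (hL (d+3) (by omega)))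
        rw [a1, a2]
        interval_cases d <;> decide
      · by_cases h2 : ℓ ≤ e+22
        · obtain ⟨t, ht, rfl⟩ : ∃ t, t < 12 ∧ ℓ = e+11+t := ⟨ℓ-(e+11), by omega, by omega⟩
          by_cases ht4 : t = 4
          · subst ht4; left; omega
          · exact absurd hL (seam1L t ht ht4)
        · by_cases h3 : ℓ + 7 ≤ 2*e+40
          · exfalso
            refine x_overlap hx (ℓ-(e+23)) 3 (by omega) (by omega) ?_
            intro d hd
            have a1 := (A3 (ℓ-(e+23)+d) (by omega)).symm.trans ((Wcongr (by omega)).trans (hL d (by omega)))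
            have a2 := (A3 (ℓ-(e+23)+d+3) (by omega)).symm.trans ((Wcongr (by omega)).trans (hL (d+3) (by omega)))
            rw [a1, a2]
            interval_cases d <;> decide
          · obtain ⟨t, ht, rfl⟩ : ∃ t, t < 6 ∧ ℓ = 2*e+34+t := ⟨ℓ-(2*e+34), by omega, by omega⟩
            by_cases ht4 : t = 4
            · subst ht4; right; omega
            · exfalso
              refine seam1L t (by omega) ht4 ?_
              intro d hd
              exact (Wq (e+11+t+d) (by omega)).symm.trans ((Wcongr (by omega)).trans (hL d hd))
    have Rocc : ∀ ℓ, ℓ + 7 ≤ 2*e+46 → (∀ d, d < 7 → W (ℓ+d) = Rw.getD d 0) → ℓ = e+20 := by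
      intro ℓ hb hR
      by_cases h1 : ℓ + 7 ≤ e+17
      · exfalso
        refine x_overlap hx ℓ 3 (by omega) (by omega) ?_
        intro d hd
        have a1 := (A1 (ℓ+d) (by omega)).symm.trans (hR d (by omega))
        have a2 := (A1 (ℓ+d+3) (by omega)).symm.trans ((Wcongr (by omega)).trans (hR (d+3) (by omega)))
        rw [a1, a2]
        interval_cases d <;> decide
      · by_cases h2 : ℓ ≤ e+22
        · obtain ⟨t, ht, rfl⟩ : ∃ t, t < 12 ∧ ℓ = e+11+t := ⟨ℓ-(e+11), by omega, by omega⟩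
          by_cases ht9 : t = 9
          · subst ht9; omega
          · exact absurd hR (seam1R t ht ht9)
        · by_cases h3 : ℓ + 7 ≤ 2*e+40
          · exfalso
            refine x_overlap hx (ℓ-(e+23)) 3 (by omega) (by omega) ?_
            intro d hd
            have a1 := (A3 (ℓ-(e+23)+d) (by omega)).symm.trans ((Wcongr (by omega)).trans (hR d (by omega)))
            have a2 := (A3 (ℓ-(e+23)+d+3) (by omega)).symm.trans ((Wcongr (by omega)).trans (hR (d+3) (by omega)))
            rw [a1, a2]
            interval_cases d <;> decide
          · obtain ⟨t, ht, rfl⟩ : ∃ t, t < 6 ∧ ℓ = 2*e+34+t := ⟨ℓ-(2*e+34), by omega, by omega⟩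
            exfalso
            refine seam1R t (by omega) (by omega) ?_
            intro d hd
            exact (Wq (e+11+t+d) (by omega)).symm.trans ((Wcongr (by omega)).trans (hR d hd))
    have hasL1 : ∀ d, d < 7 → W (e+15+d) = Lw.getD d 0 := by
      intro d hd
      refine ((Wcongr (show e+15+d = e+13+(d+2) by omega)).trans (K (d+2) (by omega))).trans ?_
      interval_cases d <;> decide
    have hasR1 : ∀ d, d < 7 → W (e+20+d) = Rw.getD d 0 := by
      intro d hd
      refine ((Wcongr (show e+20+d = e+13+(d+7) by omega)).trans (K (d+7) (by omega))).trans ?_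
      interval_cases d <;> decide
    have M2 : ∀ ℓ, i ≤ ℓ → ℓ+p+7 ≤ i+3*p → ∀ d, d < 7 → W (ℓ+d) = W (ℓ+p+d) := by
      intro ℓ h1 h2 d hd
      have h := Hper (ℓ+d-i) (by omega)
      calc W (ℓ+d) = W (i+(ℓ+d-i)) := Wcongr (by omega)
        _ = W (i+(ℓ+d-i)+p) := h
        _ = W (ℓ+p+d) := Wcongr (by omega)
    by_cases hp7 : 7 ≤ p
    · -- marker arguments: the three bad windows are not contained in the cube
      have CL1 : ¬(i ≤ e+15 ∧ e+22 ≤ i+3*p) := by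
        rintro ⟨hA, hB⟩
        by_cases hc : i + p ≤ e+15
        · obtain ⟨ℓ0, h0⟩ : ∃ ℓ0, e+15 = ℓ0 + p := ⟨e+15-p, by omega⟩
          have himg : ∀ d, d < 7 → W (ℓ0+d) = Lw.getD d 0 := by
            intro d hd
            exact (M2 ℓ0 (by omega) (by omega) d hd).trans
              ((Wcongr (by omega)).trans (hasL1 d hd))
          have := Locc ℓ0 (by omega) himg
          omega
        · have himg : ∀ d, d < 7 → W (e+15+p+d) = Lw.getD d 0 := by
            intro d hd
            exact (M2 (e+15) (by omega) (by omega) d hd).symm.trans (hasL1 d hd)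
          have := Locc (e+15+p) (by omega) himg
          omega
      have CR1 : ¬(i ≤ e+20 ∧ e+27 ≤ i+3*p) := by
        rintro ⟨hA, hB⟩
        by_cases hc : i + p ≤ e+20
        · obtain ⟨ℓ0, h0⟩ : ∃ ℓ0, e+20 = ℓ0 + p := ⟨e+20-p, by omega⟩
          have himg : ∀ d, d < 7 → W (ℓ0+d) = Rw.getD d 0 := by
            intro d hd
            exact (M2 ℓ0 (by omega) (by omega) d hd).trans
              ((Wcongr (by omega)).trans (hasR1 d hd))
          have := Rocc ℓ0 (by omega) himg
          omega
        · have himg : ∀ d, d < 7 → W (e+20+p+d) = Rw.getD d 0 := by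
            intro d hd
            exact (M2 (e+20) (by omega) (by omega) d hd).symm.trans (hasR1 d hd)
          have := Rocc (e+20+p) (by omega) himg
          omega
      have CL2 : ¬(i ≤ 2*e+38 ∧ 2*e+45 ≤ i+3*p) := by
        rintro ⟨hA, hB⟩
        by_cases hc : i + p ≤ 2*e+38
        · obtain ⟨ℓ0, h0⟩ : ∃ ℓ0, 2*e+38 = ℓ0 + p := ⟨2*e+38-p, by omega⟩
          have hasL2 : ∀ d, d < 7 → W (2*e+38+d) = Lw.getD d 0 := by
            intro d hd
            exact ((Wcongr (by omega)).trans (Wq (e+15+d) (by omega))).trans (hasL1 d hd)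
          have himg : ∀ d, d < 7 → W (ℓ0+d) = Lw.getD d 0 := by
            intro d hd
            exact (M2 ℓ0 (by omega) (by omega) d hd).trans
              ((Wcongr (by omega)).trans (hasL2 d hd))
          have := Locc ℓ0 (by omega) himg
          omega
        · omega
      -- regimes
      by_cases r1 : i + 3*p ≤ e+21
      · refine x_overlap hx i p hp (by omega) ?_
        intro d hd
        have h := Hper d (by omega)
        rw [A1 (i+d) (by omega), A1 (i+d+p) (by omega)] at h
        exact h
      · by_cases r2 : i + 3*p ≤ e+26
        · omega
        · by_cases r3 : i + 3*p ≤ 2*e+44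
          · -- overlap inside second x
            have hi21 : e+21 ≤ i := by
              rcases Nat.lt_or_ge i (e+21) with h' | h'
              · exfalso; exact CR1 ⟨by omega, by omega⟩
              · exact h'
            obtain ⟨α, hα⟩ : ∃ α, α = max i (e+23) := ⟨_, rfl⟩
            refine x_overlap hx (α - (e+23)) p hp (by omega) ?_
            intro d hd
            have h := Hper (α-i+d) (by omega)
            have b1 : W (α+d) = x.getD (α-(e+23)+d) 0 :=
              (Wcongr (by omega)).trans (A3 (α-(e+23)+d) (by omega))
            have b2 : W (α+d+p) = x.getD (α-(e+23)+d+p) 0 :=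
              (Wcongr (by omega)).trans (A3 (α-(e+23)+d+p) (by omega))
            rw [← b1, ← b2]
            calc W (α+d) = W (i+(α-i+d)) := Wcongr (by omega)
              _ = W (i+(α-i+d)+p) := h
              _ = W (α+d+p) := Wcongr (by omega)
          · omega
    · -- p ≤ 6 : small cubes
      have hp6 : p ≤ 6 := by omega
      by_cases q1 : i + 3*p ≤ e+17
      · refine x_overlap hx i p hp (by omega) ?_
        intro d hd
        have h := Hper d (by omega)
        rw [A1 (i+d) (by omega), A1 (i+d+p) (by omega)] at h
        exact h
      · by_cases q2 : i ≤ e+22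
        · -- cube meets first seam: FC2
          obtain ⟨k, hk⟩ := hx
          have hv1x : x.drop e <:+: x := ⟨x.take e, [], by simp⟩
          have hv1 : x.drop e <:+: mu^[8] [0] :=
            fac18 (hv1x.trans hk) (by simp; omega)
          have hv2x : x.take 17 <:+: x := ⟨[], x.drop 17, by simp⟩
          have hv2 : x.take 17 <:+: mu^[8] [0] :=
            fac18 (hv2x.trans hk) (by simp)
          have hlen1 : (x.drop e).length = 17 := by simp; omega
          have hlen2 : (x.take 17).length = 17 := by simp; omega
          obtain ⟨a, ha, hva⟩ := infix_exists hv1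
          obtain ⟨b, hb, hvb⟩ := infix_exists hv2
          rw [muk_length] at ha hb
          rw [hlen1] at hva ha
          rw [hlen2] at hvb hb
          rw [← tm8_eq] at hva hvb
          have m1 := List.all_eq_true.mp stage1a a (List.mem_range.mpr (by norm_num at ha ⊢; omega))
          have m2 := List.all_eq_true.mp stage1b b (List.mem_range.mpr (by norm_num at hb ⊢; omega))
          unfold win17 at m1 m2
          rw [← hva] at m1
          rw [← hvb] at m2
          simp only [Bool.or_eq_true, Bool.not_eq_true', decide_eq_false_iff_not,
            decide_eq_true_eq] at m1 m2
          rcases m1 with h' | hmem1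
          · exfalso
            refine h' ?_
            refine ⟨init.drop e, ?_⟩
            rw [← hinit, List.drop_append_of_le_length (by omega)]
          · rcases m2 with h' | hmem2
            · exfalso
              refine h' ?_
              refine ⟨(tl.take 13), ?_⟩
              rw [← htl]
              simp [List.take_append]
            · have s3 := List.all_eq_true.mp (List.all_eq_true.mp stage2 _ hmem1) _ hmem2
              unfold seamCheck at s3
              have hRlen : ((x.drop e) ++ (sw ++ x.take 17)).length = 40 := by
                simp [sw]; omega
              have hReg : ∀ r, r < 40 → ((x.drop e) ++ (sw ++ x.take 17)).getD r 0 = W (e+r) := by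
                intro r hr
                rcases Nat.lt_or_ge r 17 with h17 | h17
                · rw [List.getD_append _ _ _ _ (by omega), getD_dropW]
                  exact (A1 (e+r) (by omega)).symm
                · rw [List.getD_append_right _ _ _ _ (by omega)]
                  rcases Nat.lt_or_ge r 23 with h23 | h23
                  · rw [List.getD_append _ _ _ _ (by simp [sw]; omega)]
                    refine ((getD_congr sw (show r - (x.drop e).length = r - 17 by rw [hlen1])).trans ?_)
                    exact ((A2 (r-17) (by omega)).symm).trans (Wcongr (by omega))
                  · rw [List.getD_append_right _ _ _ _ (by simp [sw]; omega)]
                    rw [getD_takeW _ _ _ (by rw [hlen1]; simp [sw]; omega)]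
                    refine (getD_congr x (show r - (x.drop e).length - sw.length = r - 23 by rw [hlen1, hswl]; omega)).trans ?_
                    exact ((A3 (r-23) (by omega)).symm).trans (Wcongr (by omega))
              have s4 := List.all_eq_true.mp s3 (i-e) (List.mem_range.mpr (by omega))
              have s5 := List.all_eq_true.mp s4 (p-1) (List.mem_range.mpr (by omega))
              rw [show p - 1 + 1 = p by omega, hRlen] at s5
              have hc : chk ((x.drop e) ++ (sw ++ x.take 17)) (i-e) p = true := by
                refine chk_of _ _ _ ?_
                intro r hr
                rw [hReg _ (by omega), hReg _ (by omega)]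
                calc W (e+(i-e+r)) = W (i+r) := Wcongr (by omega)
                  _ = W (i+r+p) := Hper r hr
                  _ = W (e+(i-e+r+p)) := Wcongr (by omega)
              rw [hc, decide_eq_true (show 17 < i-e+3*p by omega),
                decide_eq_true (show i-e+3*p ≤ 40 by omega)] at s5
              simp at s5
        · by_cases q3 : i + 3*p ≤ 2*e+40
          · -- inside second x
            refine x_overlap hx (i-(e+23)) p hp (by omega) ?_
            intro d hd
            have h := Hper d (by omega)
            have b1 : W (i+d) = x.getD (i-(e+23)+d) 0 :=
              (Wcongr (by omega)).trans (A3 (i-(e+23)+d) (by omega))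
            have b2 : W (i+d+p) = x.getD (i-(e+23)+d+p) 0 :=
              (Wcongr (by omega)).trans (A3 (i-(e+23)+d+p) (by omega))
            rw [← b1, ← b2]
            exact h
          · -- cube meets second seam: FC2b
            obtain ⟨k, hk⟩ := hx
            have hv1x : x.drop e <:+: x := ⟨x.take e, [], by simp⟩
            have hv1 : x.drop e <:+: mu^[8] [0] :=
              fac18 (hv1x.trans hk) (by simp; omega)
            have hlen1 : (x.drop e).length = 17 := by simp; omega
            obtain ⟨a, ha, hva⟩ := infix_exists hv1
            rw [muk_length] at ha
            rw [hlen1] at hva ha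
            rw [← tm8_eq] at hva
            have m1 := List.all_eq_true.mp stage1a a (List.mem_range.mpr (by norm_num at ha ⊢; omega))
            unfold win17 at m1
            rw [← hva] at m1
            simp only [Bool.or_eq_true, Bool.not_eq_true', decide_eq_false_iff_not,
              decide_eq_true_eq] at m1
            rcases m1 with h' | hmem1
            · exfalso
              refine h' ⟨init.drop e, ?_⟩
              rw [← hinit, List.drop_append_of_le_length (by omega)]
            · have s3 := List.all_eq_true.mp stage2b _ hmem1
              unfold seamCheck at s3
              have hRlen : ((x.drop e) ++ sw).length = 23 := by simp [sw]; omega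
              have hReg : ∀ r, r < 23 → ((x.drop e) ++ sw).getD r 0 = W (2*e+23+r) := by
                intro r hr
                rcases Nat.lt_or_ge r 17 with h17 | h17
                · rw [List.getD_append _ _ _ _ (by omega), getD_dropW]
                  exact ((A3 (e+r) (by omega)).symm).trans (Wcongr (by omega))
                · rw [List.getD_append_right _ _ _ _ (by omega)]
                  refine (getD_congr sw (show r - (x.drop e).length = r - 17 by rw [hlen1])).trans ?_
                  exact ((A4 (r-17) (by omega)).symm).trans (Wcongr (by omega))
              have s4 := List.all_eq_true.mp s3 (i-(2*e+23)) (List.mem_range.mpr (by omega))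
              have s5 := List.all_eq_true.mp s4 (p-1) (List.mem_range.mpr (by omega))
              rw [show p - 1 + 1 = p by omega, hRlen] at s5
              have hc : chk ((x.drop e) ++ sw) (i-(2*e+23)) p = true := by
                refine chk_of _ _ _ ?_
                intro r hr
                rw [hReg _ (by omega), hReg _ (by omega)]
                calc W (2*e+23+(i-(2*e+23)+r)) = W (i+r) := Wcongr (by omega)
                  _ = W (i+r+p) := Hper r hr
                  _ = W (2*e+23+(i-(2*e+23)+r+p)) := Wcongr (by omega)
              rw [hc, decide_eq_true (show 17 < i-(2*e+23)+3*p by omega),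
                decide_eq_true (show i-(2*e+23)+3*p ≤ 23 by omega)] at s5
              simp at s5


/-- If `x` is a factor of the Thue–Morse word with prefix and suffix `1001`,
then `x101100x101100` is cubefree. -/
theorem x101100_cubefree (x : List (Fin 2)) (hx : FactorTM x)
    (hpre : [1, 0, 0, 1] <+: x) (hsuf : [1, 0, 0, 1] <:+ x) :
    Cubefree (x ++ [1, 0, 1, 1, 0, 0] ++ x ++ [1, 0, 1, 1, 0, 0]) := by

  intro u hinf hcube
  obtain ⟨z, hz, rfl⟩ := hcube
  have hassoc : x ++ [1, 0, 1, 1, 0, 0] ++ x ++ [1, 0, 1, 1, 0, 0]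
      = x ++ (sw ++ (x ++ sw)) := by
    show x ++ sw ++ x ++ sw = _
    simp [List.append_assoc]
  rw [hassoc] at hinf
  obtain ⟨s, t, hst⟩ := hinf
  set p := z.length with hpz
  have hzlen : (z ++ z ++ z).length = 3*p := by simp; ring
  have hp : 1 ≤ p := by
    rcases z with _ | _
    · exact absurd rfl hz
    · simp [hpz]
  have hulen : s.length + 3*p ≤ (x ++ (sw ++ (x ++ sw))).length := by
    rw [← hst]; simp; omega
  have hBL : (x ++ (sw ++ (x ++ sw))).length = 2*x.length + 12 := by simp [sw]; omega
  have hgu : ∀ r, r < 3*p → (x ++ (sw ++ (x ++ sw))).getD (s.length + r) 0 = (z++z++z).getD r 0 := by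
    intro r hr
    have h0 : (x ++ (sw ++ (x ++ sw))) = s ++ ((z++z++z) ++ t) := by
      rw [← hst]; simp [List.append_assoc]
    rw [h0]
    have h1 : (s ++ ((z++z++z) ++ t)).getD (s.length + r) 0
        = ((z++z++z) ++ t).getD (s.length + r - s.length) 0 :=
      List.getD_append_right _ _ _ _ (by omega)
    rw [h1, show s.length + r - s.length = r by omega]
    exact List.getD_append _ _ _ _ (by simp only [List.length_append]; omega)
  have hzz : ∀ r, r < 2*p → (z++z++z).getD r 0 = (z++z++z).getD (r+p) 0 := by
    intro r hr
    rcases Nat.lt_or_ge r p with h' | h'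
    · have e1 : ((z++z)++z).getD r 0 = z.getD r 0 := by
        have h1 : ((z++z)++z).getD r 0 = (z++z).getD r 0 :=
          List.getD_append _ _ _ _ (by simp only [List.length_append]; omega)
        have h2 : (z++z).getD r 0 = z.getD r 0 := List.getD_append _ _ _ _ (by omega)
        rw [h1, h2]
      have e2 : ((z++z)++z).getD (r+p) 0 = z.getD r 0 := by
        have h1 : ((z++z)++z).getD (r+p) 0 = (z++z).getD (r+p) 0 :=
          List.getD_append _ _ _ _ (by simp only [List.length_append]; omega)
        have h2 : (z++z).getD (r+p) 0 = z.getD (r+p-z.length) 0 :=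
          List.getD_append_right _ _ _ _ (by omega)
        rw [h1, h2]
        try exact getD_congr _ (by omega)
      exact e1.trans e2.symm
    · have e1 : ((z++z)++z).getD r 0 = z.getD (r-p) 0 := by
        have h1 : ((z++z)++z).getD r 0 = (z++z).getD r 0 :=
          List.getD_append _ _ _ _ (by simp only [List.length_append]; omega)
        have h2 : (z++z).getD r 0 = z.getD (r - z.length) 0 :=
          List.getD_append_right _ _ _ _ (by omega)
        rw [h1, h2]
        try exact getD_congr _ (by omega)
      have e2 : ((z++z)++z).getD (r+p) 0 = z.getD (r-p) 0 := by
        have h1 : ((z++z)++z).getD (r+p) 0 = z.getD (r+p-(z++z).length) 0 :=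
          List.getD_append_right _ _ _ _ (by simp only [List.length_append]; omega)
        rw [h1]
        try exact getD_congr _ (by simp only [List.length_append]; omega)
        try exact getD_congr _ (by omega)
      exact e1.trans e2.symm
  refine main x hx hpre hsuf (fun n => (x ++ (sw ++ (x ++ sw))).getD n 0) (fun n => rfl)
    s.length p hp (by omega) ?_
  intro r hr
  show (x ++ (sw ++ (x ++ sw))).getD (s.length + r) 0 = (x ++ (sw ++ (x ++ sw))).getD (s.length + r + p) 0
  rw [hgu r (by omega), show s.length + r + p = s.length + (r+p) by omega, hgu (r+p) (by omega)]
  exact hzz r hr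
end
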